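/- There is a constant C > 0 with the following property. Let u : ℝ² → ℝ² be a C^∞, compactly supported, divergence-free vector field and define Γ̄(l) := ⨍_{𝕊} ∫_{ℝ²} u(x) · u(x+ln) dx dn for l ≥ 0. Then Γ̄ is twice differentiable and |Γ̄''(l)| ≤ C ∫_{ℝ²} |∇u(x)|² dx for every l ≥ 0. -/

import Mathlib

/-! STATEMENT 8: `Γ̄` is twice differentiable with `|Γ̄(l)| ≤ C ∫ |∇u|²` for all `l ≥ 0`, uniformly in `u`. -/

open MeasureTheory

noncomputable section

/-- The plane `ℝ²`. -/
abbrev E2 : Type := EuclideanSpace ℝ (Fin 2)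

/-- Partial derivative `∂ᵢ f` of a scalar function on `ℝ²`. -/
def pd (i : Fin 2) (f : E2 → ℝ) (x : E2) : ℝ :=
  fderiv ℝ f x (EuclideanSpace.single i 1)

/-- `|∇u(x)|² = (∂₁u¹)² + (∂₂u²)² + (∂₁u²)² + (∂₂u¹)²`. -/
def gradSq (u : E2 → E2) (x : E2) : ℝ :=
  (pd 0 (fun y => u y 0) x) ^ 2 + (pd 1 (fun y => u y 1) x) ^ 2
    + (pd 0 (fun y => u y 1) x) ^ 2 + (pd 1 (fun y => u y 0) x) ^ 2

/-- The arc-length (surface) measure on the unit circle `𝕊 ⊂ ℝ²`.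
Averaging `⨍` against it is averaging with respect to the uniform
probability measure on `𝕊`. -/
def sphσ : Measure (Metric.sphere (0 : E2) 1) := (volume : Measure E2).toSphere

/-- `Γ̄(l) := ⨍_𝕊 ∫_{ℝ²} u(x) · u(x+ln) dx dn`. -/
def GammaBar (u : E2 → E2) (l : ℝ) : ℝ :=
  ⨍ n : Metric.sphere (0 : E2) 1,
    (∫ x : E2, (inner ℝ (u x) (u (x + l • (n : E2))) : ℝ)) ∂sphσ

/-! ### Auxiliary lemmas -/

section Aux

variable {u : E2 → E2}

instance : IsFiniteMeasure sphσ := by unfold sphσ; infer_instance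

lemma sph_norm (n : Metric.sphere (0 : E2) 1) : ‖(n : E2)‖ = 1 := norm_eq_of_mem_sphere n

lemma intSph {f : Metric.sphere (0 : E2) 1 → ℝ} (hf : Continuous f) : Integrable f sphσ :=
  hf.integrable_of_hasCompactSupport (isClosed_tsupport f).isCompact

lemma pd_eq (hu : Differentiable ℝ u) (i j : Fin 2) (x : E2) :
    pd j (fun y => u y i) x = fderiv ℝ u x (EuclideanSpace.single j 1) i := by
  have h2 : HasFDerivAt (fun y => u y i) ((EuclideanSpace.proj i).comp (fderiv ℝ u x)) x :=
    (EuclideanSpace.proj (𝕜 := ℝ) i).hasFDerivAt.comp x (hu x).hasFDerivAt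
  simp [pd, h2.fderiv]

lemma norm_fderiv_apply_sq_le (hu : Differentiable ℝ u) (x : E2) {n : E2}
    (hn : ‖n‖ = 1) : ‖fderiv ℝ u x n‖ ^ 2 ≤ gradSq u x := by
  set A := fderiv ℝ u x with hA
  have hdecomp : n = n 0 • EuclideanSpace.single 0 1 + n 1 • EuclideanSpace.single 1 1 := by
    ext i; fin_cases i <;> simp [EuclideanSpace.single_apply]
  have hAn : A n = n 0 • A (EuclideanSpace.single 0 1) + n 1 • A (EuclideanSpace.single 1 1) := by
    conv_lhs => rw [hdecomp]
    simp
  have hnormsq : ‖A n‖ ^ 2 = (A n 0) ^ 2 + (A n 1) ^ 2 := by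
    rw [EuclideanSpace.norm_eq, Real.sq_sqrt (by positivity)]
    simp [Fin.sum_univ_two]
  have hn2 : (n 0) ^ 2 + (n 1) ^ 2 = 1 := by
    have h := hn
    rw [EuclideanSpace.norm_eq, Real.sqrt_eq_one] at h
    simpa [Fin.sum_univ_two] using h
  have h0 : A n 0 = n 0 * A (EuclideanSpace.single 0 1) 0 + n 1 * A (EuclideanSpace.single 1 1) 0 := by
    rw [hAn]; simp
  have h1 : A n 1 = n 0 * A (EuclideanSpace.single 0 1) 1 + n 1 * A (EuclideanSpace.single 1 1) 1 := by
    rw [hAn]; simp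
  have e00 := pd_eq hu 0 0 x
  have e11 := pd_eq hu 1 1 x
  have e10 := pd_eq hu 1 0 x
  have e01 := pd_eq hu 0 1 x
  rw [hnormsq, h0, h1, gradSq, e00, e11, e10, e01, ← hA]
  nlinarith [sq_nonneg (n 0 * A (EuclideanSpace.single 1 1) 0 - n 1 * A (EuclideanSpace.single 0 1) 0),
    sq_nonneg (n 0 * A (EuclideanSpace.single 1 1) 1 - n 1 * A (EuclideanSpace.single 0 1) 1),
    sq_nonneg (A (EuclideanSpace.single 0 1) 0), sq_nonneg (A (EuclideanSpace.single 1 1) 0)]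

lemma curve_add (x n : E2) (t : ℝ) : HasDerivAt (fun s : ℝ => x + s • n) n t := by
  simpa using ((hasDerivAt_id t).smul_const n).const_add x

lemma curve_sub (x n : E2) (t : ℝ) : HasDerivAt (fun s : ℝ => x - s • n) (-n) t := by
  simpa using ((hasDerivAt_id t).smul_const n).const_sub x

lemma comp_add (hu : Differentiable ℝ u) (x n : E2) (t : ℝ) :
    HasDerivAt (fun s : ℝ => u (x + s • n)) (fderiv ℝ u (x + t • n) n) t :=
  (hu _).hasFDerivAt.comp_hasDerivAt t (curve_add x n t)

lemma comp_sub (hu : Differentiable ℝ u) (x n : E2) (t : ℝ) :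
    HasDerivAt (fun s : ℝ => u (x - s • n)) (-(fderiv ℝ u (x - t • n) n)) t := by
  have h := (hu _).hasFDerivAt.comp_hasDerivAt t (curve_sub x n t)
  rw [map_neg] at h
  exact h

lemma deriv_inner_add (hu : Differentiable ℝ u) (x n : E2) (t : ℝ) :
    HasDerivAt (fun s : ℝ => (inner ℝ (u x) (u (x + s • n)) : ℝ))
      (inner ℝ (u x) (fderiv ℝ u (x + t • n) n) : ℝ) t := by
  simpa using HasDerivAt.inner ℝ (hasDerivAt_const t (u x)) (comp_add hu x n t)

lemma deriv_inner_sub (hu : Differentiable ℝ u) (x n : E2) (t : ℝ) :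
    HasDerivAt (fun s : ℝ => (inner ℝ (u (x - s • n)) (fderiv ℝ u x n) : ℝ))
      (-(inner ℝ (fderiv ℝ u (x - t • n) n) (fderiv ℝ u x n) : ℝ)) t := by
  simpa using HasDerivAt.inner ℝ (comp_sub hu x n t) (hasDerivAt_const t (fderiv ℝ u x n))

lemma supp_inner_left {w : E2 → E2} :
    Function.support (fun x => (inner ℝ (u x) (w x) : ℝ)) ⊆ Function.support u := by
  intro x hx
  simp only [Function.mem_support] at hx ⊢
  contrapose! hx
  simp [hx]

lemma supp_inner_right {v : E2 → E2} {w : E2 → E2 →L[ℝ] E2} {n : E2} :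
    Function.support (fun x => (inner ℝ (v x) (w x n) : ℝ)) ⊆ Function.support w := by
  intro x hx
  simp only [Function.mem_support] at hx ⊢
  contrapose! hx
  simp [hx]

lemma hasDerivAt_H (hu : ContDiff ℝ (⊤ : ℕ∞) u) (hc : HasCompactSupport u)
    {K : ℝ} (hK : ∀ y, ‖fderiv ℝ u y‖ ≤ K) {n : E2} (hn : ‖n‖ = 1) (l : ℝ) :
    HasDerivAt (fun s => ∫ x : E2, (inner ℝ (u x) (u (x + s • n)) : ℝ))
      (∫ x : E2, (inner ℝ (u x) (fderiv ℝ u (x + l • n) n) : ℝ)) l := by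
  have hud : Differentiable ℝ u := hu.differentiable (by simp)
  have hcu : Continuous u := hu.continuous
  have hDc : Continuous (fderiv ℝ u) := (hu.fderiv_right (m := (⊤ : ℕ∞)) (by simp)).continuous
  have key := hasDerivAt_integral_of_dominated_loc_of_deriv_le (μ := (volume : Measure E2))
      (F := fun s x => (inner ℝ (u x) (u (x + s • n)) : ℝ))
      (F' := fun s x => (inner ℝ (u x) (fderiv ℝ u (x + s • n) n) : ℝ))
      (x₀ := l) (s := Metric.ball l 1) (bound := fun x => ‖u x‖ * K) (Metric.ball_mem_nhds _ one_pos)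
      ?_ ?_ ?_ ?_ ?_ ?_
  · exact key.2
  · refine Filter.Eventually.of_forall fun t => Continuous.aestronglyMeasurable ?_
    exact hcu.inner (hcu.comp (continuous_id.add continuous_const))
  · refine Continuous.integrable_of_hasCompactSupport
      (hcu.inner (hcu.comp (continuous_id.add continuous_const))) (hc.mono supp_inner_left)
  · refine Continuous.aestronglyMeasurable ?_
    exact hcu.inner (((ContinuousLinearMap.apply ℝ E2 n).continuous.comp
      (hDc.comp (continuous_id.add continuous_const))))
  · refine Filter.Eventually.of_forall fun x t _ => ?_
    calc ‖(inner ℝ (u x) (fderiv ℝ u (x + t • n) n) : ℝ)‖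
        ≤ ‖u x‖ * ‖fderiv ℝ u (x + t • n) n‖ := by
          simpa using abs_real_inner_le_norm (u x) (fderiv ℝ u (x + t • n) n)
      _ ≤ ‖u x‖ * K := by
          refine mul_le_mul_of_nonneg_left ?_ (norm_nonneg _)
          calc ‖fderiv ℝ u (x + t • n) n‖ ≤ ‖fderiv ℝ u (x + t • n)‖ * ‖n‖ :=
                ContinuousLinearMap.le_opNorm _ _
            _ = ‖fderiv ℝ u (x + t • n)‖ := by rw [hn, mul_one]
            _ ≤ K := hK _
  · exact (hcu.norm.integrable_of_hasCompactSupport hc.norm).mul_const K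
  · exact Filter.Eventually.of_forall fun x t _ => deriv_inner_add hud x n t

lemma hasDerivAt_G (hu : ContDiff ℝ (⊤ : ℕ∞) u) (hc : HasCompactSupport u)
    {K : ℝ} (hK : ∀ y, ‖fderiv ℝ u y‖ ≤ K) {n : E2} (hn : ‖n‖ = 1) (l : ℝ) :
    HasDerivAt (fun s => ∫ x : E2, (inner ℝ (u (x - s • n)) (fderiv ℝ u x n) : ℝ))
      (-∫ x : E2, (inner ℝ (fderiv ℝ u (x - l • n) n) (fderiv ℝ u x n) : ℝ)) l := by
  have hud : Differentiable ℝ u := hu.differentiable (by simp)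
  have hcu : Continuous u := hu.continuous
  have hDc : Continuous (fderiv ℝ u) := (hu.fderiv_right (m := (⊤ : ℕ∞)) (by simp)).continuous
  have hDcs : HasCompactSupport (fderiv ℝ u) := hc.fderiv ℝ
  have hDn : Continuous fun x : E2 => fderiv ℝ u x n :=
    (ContinuousLinearMap.apply ℝ E2 n).continuous.comp hDc
  have key := hasDerivAt_integral_of_dominated_loc_of_deriv_le (μ := (volume : Measure E2))
      (F := fun s x => (inner ℝ (u (x - s • n)) (fderiv ℝ u x n) : ℝ))
      (F' := fun s x => (-(inner ℝ (fderiv ℝ u (x - s • n) n) (fderiv ℝ u x n)) : ℝ))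
      (x₀ := l) (s := Metric.ball l 1) (bound := fun x => K * ‖fderiv ℝ u x‖) (Metric.ball_mem_nhds _ one_pos)
      ?_ ?_ ?_ ?_ ?_ ?_
  · have h2 := key.2
    rwa [integral_neg] at h2
  · refine Filter.Eventually.of_forall fun t => Continuous.aestronglyMeasurable ?_
    exact (hcu.comp (continuous_id.sub continuous_const)).inner hDn
  · exact Continuous.integrable_of_hasCompactSupport
      ((hcu.comp (continuous_id.sub continuous_const)).inner hDn) (hDcs.mono supp_inner_right)
  · refine Continuous.aestronglyMeasurable ?_
    exact (((ContinuousLinearMap.apply ℝ E2 n).continuous.comp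
      (hDc.comp (continuous_id.sub continuous_const))).inner hDn).neg
  · refine Filter.Eventually.of_forall fun x t _ => ?_
    have hb : ‖fderiv ℝ u (x - t • n) n‖ ≤ K := by
      calc ‖fderiv ℝ u (x - t • n) n‖ ≤ ‖fderiv ℝ u (x - t • n)‖ * ‖n‖ :=
            ContinuousLinearMap.le_opNorm _ _
        _ = ‖fderiv ℝ u (x - t • n)‖ := by rw [hn, mul_one]
        _ ≤ K := hK _
    have hb2 : ‖fderiv ℝ u x n‖ ≤ ‖fderiv ℝ u x‖ := by
      calc ‖fderiv ℝ u x n‖ ≤ ‖fderiv ℝ u x‖ * ‖n‖ := ContinuousLinearMap.le_opNorm _ _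
        _ = ‖fderiv ℝ u x‖ := by rw [hn, mul_one]
    calc ‖(-(inner ℝ (fderiv ℝ u (x - t • n) n) (fderiv ℝ u x n)) : ℝ)‖
        ≤ ‖fderiv ℝ u (x - t • n) n‖ * ‖fderiv ℝ u x n‖ := by
          rw [norm_neg]
          simpa using abs_real_inner_le_norm (fderiv ℝ u (x - t • n) n) (fderiv ℝ u x n)
      _ ≤ K * ‖fderiv ℝ u x‖ := by
          refine mul_le_mul hb hb2 (norm_nonneg _) ((norm_nonneg _).trans hb)
  · exact ((hDc.norm.integrable_of_hasCompactSupport hDcs.norm).const_mul K)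
  · exact Filter.Eventually.of_forall fun x t _ => deriv_inner_sub hud x n t

lemma H1_eq_G (n : E2) (l : ℝ) :
    (∫ x : E2, (inner ℝ (u x) (fderiv ℝ u (x + l • n) n) : ℝ))
      = ∫ x : E2, (inner ℝ (u (x - l • n)) (fderiv ℝ u x n) : ℝ) := by
  have := integral_add_right_eq_self (μ := (volume : Measure E2))
    (fun x : E2 => (inner ℝ (u (x - l • n)) (fderiv ℝ u x n) : ℝ)) (l • n)
  rw [← this]
  simp

lemma gradSq_cont (hu : ContDiff ℝ (⊤ : ℕ∞) u) : Continuous (gradSq u) := by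
  have hud : Differentiable ℝ u := hu.differentiable (by simp)
  have hDc : Continuous (fderiv ℝ u) := (hu.fderiv_right (m := (⊤ : ℕ∞)) (by simp)).continuous
  have hpd : ∀ i j : Fin 2, Continuous fun x => pd j (fun y => u y i) x := by
    intro i j
    have : (fun x => pd j (fun y => u y i) x)
        = fun x => fderiv ℝ u x (EuclideanSpace.single j 1) i := by
      funext x; exact pd_eq hud i j x
    rw [this]
    exact (EuclideanSpace.proj (𝕜 := ℝ) i).continuous.comp
      ((ContinuousLinearMap.apply ℝ E2 (EuclideanSpace.single j 1)).continuous.comp hDc)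
  unfold gradSq
  fun_prop (disch := exact hpd _ _)

lemma gradSq_cs (hu : ContDiff ℝ (⊤ : ℕ∞) u) (hc : HasCompactSupport u) :
    HasCompactSupport (gradSq u) := by
  have hud : Differentiable ℝ u := hu.differentiable (by simp)
  refine (hc.fderiv ℝ).mono ?_
  intro x hx
  simp only [Function.mem_support] at hx ⊢
  contrapose! hx
  simp [gradSq, pd_eq hud, hx]

lemma H2_bound (hu : ContDiff ℝ (⊤ : ℕ∞) u) (hc : HasCompactSupport u)
    {n : E2} (hn : ‖n‖ = 1) (l : ℝ) :
    |∫ x : E2, (inner ℝ (fderiv ℝ u (x - l • n) n) (fderiv ℝ u x n) : ℝ)|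
      ≤ ∫ x : E2, gradSq u x := by
  have hud : Differentiable ℝ u := hu.differentiable (by simp)
  have hDc : Continuous (fderiv ℝ u) := (hu.fderiv_right (m := (⊤ : ℕ∞)) (by simp)).continuous
  have hDcs : HasCompactSupport (fderiv ℝ u) := hc.fderiv ℝ
  have hDn : Continuous fun x : E2 => fderiv ℝ u x n :=
    (ContinuousLinearMap.apply ℝ E2 n).continuous.comp hDc
  have hcont : Continuous fun x : E2 =>
      (inner ℝ (fderiv ℝ u (x - l • n) n) (fderiv ℝ u x n) : ℝ) :=
    (((ContinuousLinearMap.apply ℝ E2 n).continuous.comp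
      (hDc.comp (continuous_id.sub continuous_const))).inner hDn)
  have hint : Integrable (fun x : E2 =>
      (inner ℝ (fderiv ℝ u (x - l • n) n) (fderiv ℝ u x n) : ℝ)) :=
    hcont.integrable_of_hasCompactSupport (hDcs.mono supp_inner_right)
  have hgsint : Integrable (gradSq u) :=
    (gradSq_cont hu).integrable_of_hasCompactSupport (gradSq_cs hu hc)
  have hgsint' : Integrable (fun x : E2 => gradSq u (x - l • n)) :=
    hgsint.comp_sub_right (l • n)
  calc |∫ x : E2, (inner ℝ (fderiv ℝ u (x - l • n) n) (fderiv ℝ u x n) : ℝ)|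
      ≤ ∫ x : E2, ‖(inner ℝ (fderiv ℝ u (x - l • n) n) (fderiv ℝ u x n) : ℝ)‖ := by
        simpa using norm_integral_le_integral_norm
          (fun x : E2 => (inner ℝ (fderiv ℝ u (x - l • n) n) (fderiv ℝ u x n) : ℝ))
    _ ≤ ∫ x : E2, (gradSq u (x - l • n) + gradSq u x) / 2 := by
        refine integral_mono hint.norm ((hgsint'.add hgsint).div_const 2) fun x => ?_
        have h1 : ‖fderiv ℝ u (x - l • n) n‖ ^ 2 ≤ gradSq u (x - l • n) :=
          norm_fderiv_apply_sq_le hud _ hn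
        have h2 : ‖fderiv ℝ u x n‖ ^ 2 ≤ gradSq u x := norm_fderiv_apply_sq_le hud _ hn
        have h3 : |(inner ℝ (fderiv ℝ u (x - l • n) n) (fderiv ℝ u x n) : ℝ)|
            ≤ ‖fderiv ℝ u (x - l • n) n‖ * ‖fderiv ℝ u x n‖ := abs_real_inner_le_norm _ _
        have h4 : (0:ℝ) ≤ ‖fderiv ℝ u (x - l • n) n‖ := norm_nonneg _
        have h5 : (0:ℝ) ≤ ‖fderiv ℝ u x n‖ := norm_nonneg _
        simp only [Real.norm_eq_abs]
        nlinarith [sq_nonneg (‖fderiv ℝ u (x - l • n) n‖ - ‖fderiv ℝ u x n‖)]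
    _ = ∫ x : E2, gradSq u x := by
        rw [integral_div, integral_add hgsint' hgsint,
          integral_sub_right_eq_self (μ := (volume : Measure E2)) (gradSq u) (l • n)]
        ring

end Aux

theorem GammaBar_second_deriv_bound :
    ∃ C : ℝ, 0 < C ∧
      ∀ (u : E2 → E2), ContDiff ℝ (⊤ : ℕ∞) u → HasCompactSupport u →
        (∀ x, pd 0 (fun y => u y 0) x + pd 1 (fun y => u y 1) x = 0) →
        ∀ l : ℝ, 0 ≤ l →
          DifferentiableAt ℝ (GammaBar u) l ∧
          DifferentiableAt ℝ (deriv (GammaBar u)) l ∧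
          |deriv (deriv (GammaBar u)) l| ≤ C * ∫ x : E2, gradSq u x := by
  refine ⟨1, one_pos, ?_⟩
  intro u hu hc _ l _
  have hud : Differentiable ℝ u := hu.differentiable (by simp)
  have hcu : Continuous u := hu.continuous
  have hDc : Continuous (fderiv ℝ u) := (hu.fderiv_right (m := (⊤ : ℕ∞)) (by simp)).continuous
  have hDcs : HasCompactSupport (fderiv ℝ u) := hc.fderiv ℝ
  obtain ⟨y₁, hK⟩ := hDc.norm.exists_forall_ge_of_hasCompactSupport hDcs.norm
  set K : ℝ := ‖fderiv ℝ u y₁‖ with hKdef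
  obtain ⟨y₂, hKu⟩ := hcu.norm.exists_forall_ge_of_hasCompactSupport hc.norm
  set Ku : ℝ := ‖u y₂‖ with hKudef
  set c : ℝ := (sphσ Set.univ).toReal with hcdef
  have hc0 : 0 ≤ c := ENNReal.toReal_nonneg
  set IGS : ℝ := ∫ x : E2, gradSq u x with hIGSdef
  have hIGS0 : 0 ≤ IGS := integral_nonneg fun x => by unfold gradSq; positivity
  -- continuity in `n` of the three inner integrals
  have contH : ∀ s : ℝ, Continuous fun n : Metric.sphere (0 : E2) 1 =>
      ∫ x : E2, (inner ℝ (u x) (u (x + s • (n : E2))) : ℝ) := by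
    intro s
    refine continuous_of_dominated (bound := fun x => ‖u x‖ * Ku) ?_ ?_ ?_ ?_
    · intro n
      exact (hcu.inner (hcu.comp (continuous_id.add continuous_const))).aestronglyMeasurable
    · intro n
      refine Filter.Eventually.of_forall fun x => ?_
      calc ‖(inner ℝ (u x) (u (x + s • (n : E2))) : ℝ)‖
          ≤ ‖u x‖ * ‖u (x + s • (n : E2))‖ := by
            simpa using abs_real_inner_le_norm (u x) (u (x + s • (n : E2)))
        _ ≤ ‖u x‖ * Ku := mul_le_mul_of_nonneg_left (hKu _) (norm_nonneg _)
    · exact (hcu.norm.integrable_of_hasCompactSupport hc.norm).mul_const Ku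
    · refine Filter.Eventually.of_forall fun x => ?_
      exact Continuous.inner continuous_const
        (hcu.comp (continuous_const.add (continuous_subtype_val.const_smul s)))
  have contH1 : ∀ s : ℝ, Continuous fun n : Metric.sphere (0 : E2) 1 =>
      ∫ x : E2, (inner ℝ (u x) (fderiv ℝ u (x + s • (n : E2)) (n : E2)) : ℝ) := by
    intro s
    refine continuous_of_dominated (bound := fun x => ‖u x‖ * K) ?_ ?_ ?_ ?_
    · intro n
      exact (hcu.inner ((ContinuousLinearMap.apply ℝ E2 (n : E2)).continuous.comp
        (hDc.comp (continuous_id.add continuous_const)))).aestronglyMeasurable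
    · intro n
      refine Filter.Eventually.of_forall fun x => ?_
      calc ‖(inner ℝ (u x) (fderiv ℝ u (x + s • (n : E2)) (n : E2)) : ℝ)‖
          ≤ ‖u x‖ * ‖fderiv ℝ u (x + s • (n : E2)) (n : E2)‖ := by
            simpa using abs_real_inner_le_norm (u x) (fderiv ℝ u (x + s • (n : E2)) (n : E2))
        _ ≤ ‖u x‖ * K := by
            refine mul_le_mul_of_nonneg_left ?_ (norm_nonneg _)
            calc ‖fderiv ℝ u (x + s • (n : E2)) (n : E2)‖
                ≤ ‖fderiv ℝ u (x + s • (n : E2))‖ * ‖(n : E2)‖ :=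
                  ContinuousLinearMap.le_opNorm _ _
              _ = ‖fderiv ℝ u (x + s • (n : E2))‖ := by rw [sph_norm n, mul_one]
              _ ≤ K := hK _
    · exact (hcu.norm.integrable_of_hasCompactSupport hc.norm).mul_const K
    · refine Filter.Eventually.of_forall fun x => ?_
      refine Continuous.inner continuous_const ?_
      exact isBoundedBilinearMap_apply.continuous.comp
        ((hDc.comp (continuous_const.add (continuous_subtype_val.const_smul s))).prodMk
          continuous_subtype_val)
  have contH2 : ∀ s : ℝ, Continuous fun n : Metric.sphere (0 : E2) 1 =>
      -∫ x : E2, (inner ℝ (fderiv ℝ u (x - s • (n : E2)) (n : E2)) (fderiv ℝ u x (n : E2)) : ℝ) := by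
    intro s
    refine Continuous.neg ?_
    refine continuous_of_dominated (bound := fun x => K * ‖fderiv ℝ u x‖) ?_ ?_ ?_ ?_
    · intro n
      exact ((((ContinuousLinearMap.apply ℝ E2 (n : E2)).continuous.comp
        (hDc.comp (continuous_id.sub continuous_const))).inner
        ((ContinuousLinearMap.apply ℝ E2 (n : E2)).continuous.comp hDc))).aestronglyMeasurable
    · intro n
      refine Filter.Eventually.of_forall fun x => ?_
      have hb : ‖fderiv ℝ u (x - s • (n : E2)) (n : E2)‖ ≤ K := by
        calc ‖fderiv ℝ u (x - s • (n : E2)) (n : E2)‖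
            ≤ ‖fderiv ℝ u (x - s • (n : E2))‖ * ‖(n : E2)‖ := ContinuousLinearMap.le_opNorm _ _
          _ = ‖fderiv ℝ u (x - s • (n : E2))‖ := by rw [sph_norm n, mul_one]
          _ ≤ K := hK _
      have hb2 : ‖fderiv ℝ u x (n : E2)‖ ≤ ‖fderiv ℝ u x‖ := by
        calc ‖fderiv ℝ u x (n : E2)‖ ≤ ‖fderiv ℝ u x‖ * ‖(n : E2)‖ :=
              ContinuousLinearMap.le_opNorm _ _
          _ = ‖fderiv ℝ u x‖ := by rw [sph_norm n, mul_one]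
      calc ‖(inner ℝ (fderiv ℝ u (x - s • (n : E2)) (n : E2)) (fderiv ℝ u x (n : E2)) : ℝ)‖
          ≤ ‖fderiv ℝ u (x - s • (n : E2)) (n : E2)‖ * ‖fderiv ℝ u x (n : E2)‖ := by
            simpa using abs_real_inner_le_norm (fderiv ℝ u (x - s • (n : E2)) (n : E2))
              (fderiv ℝ u x (n : E2))
        _ ≤ K * ‖fderiv ℝ u x‖ :=
            mul_le_mul hb hb2 (norm_nonneg _) ((norm_nonneg _).trans hb)
    · exact (hDc.norm.integrable_of_hasCompactSupport hDcs.norm).const_mul K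
    · refine Filter.Eventually.of_forall fun x => ?_
      refine Continuous.inner ?_ ?_
      · exact isBoundedBilinearMap_apply.continuous.comp
          ((hDc.comp (continuous_const.sub (continuous_subtype_val.const_smul s))).prodMk
            continuous_subtype_val)
      · exact isBoundedBilinearMap_apply.continuous.comp
          (continuous_const.prodMk continuous_subtype_val)
  -- first outer derivative
  have houter1 : ∀ s : ℝ,
      HasDerivAt (fun t => ∫ n : Metric.sphere (0 : E2) 1,
          (∫ x : E2, (inner ℝ (u x) (u (x + t • (n : E2))) : ℝ)) ∂sphσ)
        (∫ n : Metric.sphere (0 : E2) 1,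
          (∫ x : E2, (inner ℝ (u x) (fderiv ℝ u (x + s • (n : E2)) (n : E2)) : ℝ)) ∂sphσ) s := by
    intro s
    have key := hasDerivAt_integral_of_dominated_loc_of_deriv_le (μ := sphσ)
        (F := fun t (n : Metric.sphere (0 : E2) 1) =>
          ∫ x : E2, (inner ℝ (u x) (u (x + t • (n : E2))) : ℝ))
        (F' := fun t (n : Metric.sphere (0 : E2) 1) =>
          ∫ x : E2, (inner ℝ (u x) (fderiv ℝ u (x + t • (n : E2)) (n : E2)) : ℝ))
        (x₀ := s) (s := Metric.ball s 1) (bound := fun _ => ∫ x : E2, ‖u x‖ * K) (Metric.ball_mem_nhds _ one_pos)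
        ?_ ?_ ?_ ?_ ?_ ?_
    · exact key.2
    · exact Filter.Eventually.of_forall fun t => (contH t).aestronglyMeasurable
    · exact intSph (contH s)
    · exact (contH1 s).aestronglyMeasurable
    · refine Filter.Eventually.of_forall fun n t _ => ?_
      have hint1 : Integrable (fun x : E2 =>
          ‖(inner ℝ (u x) (fderiv ℝ u (x + t • (n : E2)) (n : E2)) : ℝ)‖) := by
        refine (Continuous.integrable_of_hasCompactSupport ?_ (hc.mono supp_inner_left)).norm
        exact hcu.inner ((ContinuousLinearMap.apply ℝ E2 (n : E2)).continuous.comp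
          (hDc.comp (continuous_id.add continuous_const)))
      calc ‖∫ x : E2, (inner ℝ (u x) (fderiv ℝ u (x + t • (n : E2)) (n : E2)) : ℝ)‖
          ≤ ∫ x : E2, ‖(inner ℝ (u x) (fderiv ℝ u (x + t • (n : E2)) (n : E2)) : ℝ)‖ :=
            norm_integral_le_integral_norm _
        _ ≤ ∫ x : E2, ‖u x‖ * K := by
            refine integral_mono hint1
              ((hcu.norm.integrable_of_hasCompactSupport hc.norm).mul_const K) fun x => ?_
            calc ‖(inner ℝ (u x) (fderiv ℝ u (x + t • (n : E2)) (n : E2)) : ℝ)‖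
                ≤ ‖u x‖ * ‖fderiv ℝ u (x + t • (n : E2)) (n : E2)‖ := by
                  simpa using abs_real_inner_le_norm (u x)
                    (fderiv ℝ u (x + t • (n : E2)) (n : E2))
              _ ≤ ‖u x‖ * K := by
                  refine mul_le_mul_of_nonneg_left ?_ (norm_nonneg _)
                  calc ‖fderiv ℝ u (x + t • (n : E2)) (n : E2)‖
                      ≤ ‖fderiv ℝ u (x + t • (n : E2))‖ * ‖(n : E2)‖ :=
                        ContinuousLinearMap.le_opNorm _ _
                    _ = ‖fderiv ℝ u (x + t • (n : E2))‖ := by rw [sph_norm n, mul_one]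
                    _ ≤ K := hK _
    · exact integrable_const _
    · exact Filter.Eventually.of_forall fun n t _ => hasDerivAt_H hu hc hK (sph_norm n) t
  -- second outer derivative
  have houter2 : ∀ s : ℝ,
      HasDerivAt (fun t => ∫ n : Metric.sphere (0 : E2) 1,
          (∫ x : E2, (inner ℝ (u x) (fderiv ℝ u (x + t • (n : E2)) (n : E2)) : ℝ)) ∂sphσ)
        (∫ n : Metric.sphere (0 : E2) 1,
          (-∫ x : E2, (inner ℝ (fderiv ℝ u (x - s • (n : E2)) (n : E2))
            (fderiv ℝ u x (n : E2)) : ℝ)) ∂sphσ) s := by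
    intro s
    have key := hasDerivAt_integral_of_dominated_loc_of_deriv_le (μ := sphσ)
        (F := fun t (n : Metric.sphere (0 : E2) 1) =>
          ∫ x : E2, (inner ℝ (u x) (fderiv ℝ u (x + t • (n : E2)) (n : E2)) : ℝ))
        (F' := fun t (n : Metric.sphere (0 : E2) 1) =>
          -∫ x : E2, (inner ℝ (fderiv ℝ u (x - t • (n : E2)) (n : E2)) (fderiv ℝ u x (n : E2)) : ℝ))
        (x₀ := s) (s := Metric.ball s 1) (bound := fun _ => IGS) (Metric.ball_mem_nhds _ one_pos)
        ?_ ?_ ?_ ?_ ?_ ?_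
    · exact key.2
    · exact Filter.Eventually.of_forall fun t => (contH1 t).aestronglyMeasurable
    · exact intSph (contH1 s)
    · exact (contH2 s).aestronglyMeasurable
    · refine Filter.Eventually.of_forall fun n t _ => ?_
      rw [Real.norm_eq_abs, abs_neg]
      exact H2_bound hu hc (sph_norm n) t
    · exact integrable_const _
    · refine Filter.Eventually.of_forall fun n t _ => ?_
      have heq : (fun r => ∫ x : E2, (inner ℝ (u x) (fderiv ℝ u (x + r • (n : E2)) (n : E2)) : ℝ))
          = fun r => ∫ x : E2, (inner ℝ (u (x - r • (n : E2))) (fderiv ℝ u x (n : E2)) : ℝ) :=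
        funext fun r => H1_eq_G (n : E2) r
      rw [heq]
      exact hasDerivAt_G hu hc hK (sph_norm n) t
  -- assemble
  have hGB : GammaBar u = fun s => c⁻¹ * ∫ n : Metric.sphere (0 : E2) 1,
      (∫ x : E2, (inner ℝ (u x) (u (x + s • (n : E2))) : ℝ)) ∂sphσ := by
    funext s
    rw [GammaBar, average_eq, smul_eq_mul]
    rfl
  have hd1 : ∀ s : ℝ, HasDerivAt (GammaBar u)
      (c⁻¹ * ∫ n : Metric.sphere (0 : E2) 1,
        (∫ x : E2, (inner ℝ (u x) (fderiv ℝ u (x + s • (n : E2)) (n : E2)) : ℝ)) ∂sphσ) s := by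
    intro s
    rw [hGB]
    exact (houter1 s).const_mul c⁻¹
  have hderiv1 : deriv (GammaBar u) = fun s =>
      c⁻¹ * ∫ n : Metric.sphere (0 : E2) 1,
        (∫ x : E2, (inner ℝ (u x) (fderiv ℝ u (x + s • (n : E2)) (n : E2)) : ℝ)) ∂sphσ :=
    funext fun s => (hd1 s).deriv
  have hd2 : HasDerivAt (deriv (GammaBar u))
      (c⁻¹ * ∫ n : Metric.sphere (0 : E2) 1,
        (-∫ x : E2, (inner ℝ (fderiv ℝ u (x - l • (n : E2)) (n : E2))
          (fderiv ℝ u x (n : E2)) : ℝ)) ∂sphσ) l := by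
    rw [hderiv1]
    exact (houter2 l).const_mul c⁻¹
  refine ⟨(hd1 l).differentiableAt, hd2.differentiableAt, ?_⟩
  rw [hd2.deriv]
  have hb : ‖∫ n : Metric.sphere (0 : E2) 1,
      (-∫ x : E2, (inner ℝ (fderiv ℝ u (x - l • (n : E2)) (n : E2))
        (fderiv ℝ u x (n : E2)) : ℝ)) ∂sphσ‖ ≤ IGS * c := by
    refine norm_integral_le_of_norm_le_const ?_
    refine Filter.Eventually.of_forall fun n => ?_
    rw [Real.norm_eq_abs, abs_neg]
    exact H2_bound hu hc (sph_norm n) l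
  rw [abs_mul, abs_inv, abs_of_nonneg hc0, one_mul]
  rcases eq_or_lt_of_le hc0 with h0 | hpos
  · rw [← h0]
    simpa using hIGS0
  · have hb' : |∫ n : Metric.sphere (0 : E2) 1,
        (-∫ x : E2, (inner ℝ (fderiv ℝ u (x - l • (n : E2)) (n : E2))
          (fderiv ℝ u x (n : E2)) : ℝ)) ∂sphσ| ≤ IGS * c := by
      simpa [Real.norm_eq_abs] using hb
    calc c⁻¹ * |∫ n : Metric.sphere (0 : E2) 1,
        (-∫ x : E2, (inner ℝ (fderiv ℝ u (x - l • (n : E2)) (n : E2))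
          (fderiv ℝ u x (n : E2)) : ℝ)) ∂sphσ|
        ≤ c⁻¹ * (IGS * c) := mul_le_mul_of_nonneg_left hb' (inv_nonneg.2 hc0)
      _ = IGS := by field_simp
  end
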